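/- arXiv:math/0410220 — 2 statements merged into one kernel-verified Lean document; each statement's English description precedes it below -/
import Mathlib

section
/- Let C be a commutative integral domain which is a subring of a field F, and let ≺ be a local monomial order on ℕ^n. Let f, g_1,…,g_r ∈ C[[x]] with each g_j nonzero, and let f = ∑_j q_j g_j + R be the division of f by g_1,…,g_r in F[[x]] with respect to ≺ (the unique tuple given by the division theorem). Then every coefficient of R and of each q_j has the form c / ∏_{j=1}^r lc(g_j)^{d_j} with c ∈ C and d_1,…,d_r ∈ ℕ; in other words, all these coefficients lie in the localization of C at the multiplicative submonoid generated by lc(g_1),…,lc(g_r) (viewed inside F). -/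
open MvPowerSeries

noncomputable section

/-- A monomial order: a linear (strict total) order on an additive monoid of exponents,
compatible with addition. -/
structure IsMonomialOrder {M : Type*} [AddCommMonoid M] (lt : M → M → Prop) : Prop where
  total : ∀ a b, lt a b ∨ a = b ∨ lt b a
  irrefl : ∀ a, ¬ lt a a
  trans : ∀ a b c, lt a b → lt b c → lt a c
  add_right : ∀ a b c, lt a b → lt (a + c) (b + c)

/-- A local monomial order: a monomial order for which `α ≼ 0` for every `α`. -/
structure IsLocalMonomialOrder {M : Type*} [AddCommMonoid M] (lt : M → M → Prop)
    extends IsMonomialOrder lt : Prop where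
  le_zero : ∀ a, a = 0 ∨ lt a 0

/-- A monomial well order: a monomial order for which `0` is the least element. -/
structure IsWellMonomialOrder {M : Type*} [AddCommMonoid M] (lt : M → M → Prop)
    extends IsMonomialOrder lt : Prop where
  zero_le : ∀ a, a = 0 ∨ lt 0 a

/-- The Newton diagram of a multivariate power series. -/
def ND {n : ℕ} {k : Type*} [Semiring k] (f : MvPowerSeries (Fin n) k) : Set (Fin n →₀ ℕ) :=
  {α | MvPowerSeries.coeff α f ≠ 0}

/-- `e` is the `lt`-greatest element of the Newton diagram of `f`, i.e. `e = exp(f)`. -/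
def IsExp {n : ℕ} {k : Type*} [Semiring k] (lt : (Fin n →₀ ℕ) → (Fin n →₀ ℕ) → Prop)
    (f : MvPowerSeries (Fin n) k) (e : Fin n →₀ ℕ) : Prop :=
  e ∈ ND f ∧ ∀ β ∈ ND f, β ≠ e → lt β e

/-- `e + ℕ^n`. -/
def upSet {n : ℕ} (e : Fin n →₀ ℕ) : Set (Fin n →₀ ℕ) := {α | ∃ γ, α = e + γ}

/-- The set of leading exponents of the nonzero elements of an ideal of power series. -/
def ExpSet {n : ℕ} {k : Type*} [Semiring k] (lt : (Fin n →₀ ℕ) → (Fin n →₀ ℕ) → Prop)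
    (J : Ideal (MvPowerSeries (Fin n) k)) : Set (Fin n →₀ ℕ) :=
  {e | ∃ f ∈ J, IsExp lt f e}

/-- The region `Δ_j` of the partition of `ℕ^n` associated with `e_1, …, e_r`. -/
def Delta {n r : ℕ} (e : Fin r → (Fin n →₀ ℕ)) (j : Fin r) : Set (Fin n →₀ ℕ) :=
  upSet (e j) \ ⋃ (i : Fin r) (_ : i < j), upSet (e i)

/-- The region `Δ̄` of the partition of `ℕ^n` associated with `e_1, …, e_r`. -/
def DeltaBar {n r : ℕ} (e : Fin r → (Fin n →₀ ℕ)) : Set (Fin n →₀ ℕ) :=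
  (⋃ (i : Fin r), upSet (e i))ᶜ

/-- Condition (ii) of the division theorem: each quotient `q_j` is `0` or satisfies
`ND(q_j) + e_j ⊆ Δ_j`. -/
def QuotCond {n r : ℕ} {k : Type*} [Semiring k] (e : Fin r → (Fin n →₀ ℕ))
    (q : Fin r → MvPowerSeries (Fin n) k) : Prop :=
  ∀ j, q j = 0 ∨ ∀ α ∈ ND (q j), α + e j ∈ Delta e j

/-- Condition (iii) of the division theorem: the remainder `R` is `0` or satisfies
`ND(R) ⊆ Δ̄`. -/
def RemCond {n r : ℕ} {k : Type*} [Semiring k] (e : Fin r → (Fin n →₀ ℕ))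
    (R : MvPowerSeries (Fin n) k) : Prop :=
  R = 0 ∨ ND R ⊆ DeltaBar e

/-!
Compare the coefficients of `f = ∑ q_j g_j + R` at `α`, splitting each `g_j` into its leading
monomial `lc(g_j) x^{e_j}` and the rest. Since the regions `Δ_1, …, Δ_r, Δ̄` are disjoint, at
most one of `R_α` and the `(q_j)_{α - e_j} lc(g_j)` is nonzero, and it equals `f_α` minus
products `(q_j)_β (g_j)_γ` with `γ ≺ e_j`, i.e. with `β + e_j ≻ α`. A local order has no infinite
`≺`-increasing chains (by Dickson's lemma), so induction along `≻` shows that every coefficient of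
`R` and of the `q_j` is obtained from those of `f` and the `g_j` by ring operations and division
by the `lc(g_j)`.
-/

namespace Subring

variable {A : Type*} [CommRing A] (C : Subring A) {M : Submonoid A} (hM : M ≤ C.toSubmonoid)

def withDenominators : Subring A where
  carrier := {x | ∃ s ∈ M, x * s ∈ C}
  mul_mem' := by
    rintro x y ⟨s, hs, hxs⟩ ⟨t, ht, hyt⟩
    exact ⟨s * t, M.mul_mem hs ht, by simpa only [mul_mul_mul_comm] using C.mul_mem hxs hyt⟩
  one_mem' := ⟨1, M.one_mem, by simp⟩
  add_mem' := by
    rintro x y ⟨s, hs, hxs⟩ ⟨t, ht, hyt⟩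
    refine ⟨s * t, M.mul_mem hs ht, ?_⟩
    have hsum : (x + y) * (s * t) = x * s * t + y * t * s := by ring
    rw [hsum]
    exact C.add_mem (C.mul_mem hxs (hM ht)) (C.mul_mem hyt (hM hs))
  zero_mem' := ⟨1, M.one_mem, by simp⟩
  neg_mem' := by
    rintro x ⟨s, hs, hxs⟩
    exact ⟨s, hs, by simpa only [neg_mul] using C.neg_mem hxs⟩

variable {C hM}

theorem mem_withDenominators {x : A} : x ∈ C.withDenominators hM ↔ ∃ s ∈ M, x * s ∈ C :=
  Iff.rfl

theorem le_withDenominators : C ≤ C.withDenominators hM :=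
  fun x hx => ⟨1, M.one_mem, by rwa [mul_one]⟩

theorem mem_withDenominators_of_mul_mem {x s : A} (hs : s ∈ M)
    (h : x * s ∈ C.withDenominators hM) : x ∈ C.withDenominators hM := by
  obtain ⟨t, ht, hxst⟩ := h
  exact ⟨s * t, M.mul_mem hs ht, by rwa [← mul_assoc]⟩

theorem mem_withDenominators_closure_range_iff {ι : Type*} [Fintype ι] {c : ι → A}
    (hM : Submonoid.closure (Set.range c) ≤ C.toSubmonoid) {x : A} :
    x ∈ C.withDenominators hM ↔ ∃ d : ι → ℕ, x * ∏ i, c i ^ d i ∈ C := by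
  simp [mem_withDenominators, Submonoid.mem_closure_range_iff_of_fintype]

end Subring

section Division

variable {n : ℕ} {A : Type*} [CommRing A] {lt : (Fin n →₀ ℕ) → (Fin n →₀ ℕ) → Prop}

theorem IsLocalMonomialOrder.not_lt_of_le (hlt : IsLocalMonomialOrder lt)
    {a b : Fin n →₀ ℕ} (hab : a ≤ b) : ¬ lt a b := by
  obtain ⟨γ, rfl⟩ := exists_add_of_le hab
  rcases hlt.le_zero γ with rfl | hγ
  · simpa using hlt.irrefl a
  · intro h
    have h' := hlt.add_right _ _ a hγ
    rw [zero_add, add_comm] at h'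
    exact hlt.irrefl a (hlt.trans _ _ _ h h')

theorem IsLocalMonomialOrder.wellFounded_flip (hlt : IsLocalMonomialOrder lt) :
    WellFounded (flip lt) := by
  have : IsTrans _ lt := ⟨hlt.trans⟩
  refine wellFounded_iff_isEmpty_descending_chain.mpr ⟨fun ⟨s, hs⟩ => ?_⟩
  obtain ⟨m, k, hmk, hle⟩ := wellQuasiOrdered_le s
  exact hlt.not_lt_of_le hle (Nat.rel_of_forall_rel_succ_of_lt lt hs hmk)

theorem IsMonomialOrder.coeff_mul_sub_monomial_mem (hlt : IsMonomialOrder lt)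
    {g : MvPowerSeries (Fin n) A} {e : Fin n →₀ ℕ} (he : IsExp lt g e) {S : Subring A}
    (hgS : ∀ γ, coeff γ g ∈ S) {q : MvPowerSeries (Fin n) A} {α : Fin n →₀ ℕ}
    (hqS : ∀ β, lt α (β + e) → coeff β q ∈ S) :
    coeff α (q * (g - monomial e (coeff e g))) ∈ S := by
  classical
  rw [coeff_mul]
  refine S.sum_mem fun p hp => ?_
  rw [Finset.HasAntidiagonal.mem_antidiagonal] at hp
  by_cases hpe : p.2 = e
  · simp [hpe]
  by_cases hg0 : coeff p.2 g = 0
  · simp [hg0, coeff_monomial, hpe]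
  refine S.mul_mem (hqS p.1 ?_) ?_
  · have h := hlt.add_right _ _ p.1 (he.2 p.2 hg0 hpe)
    rwa [add_comm, hp, add_comm] at h
  · rw [map_sub, coeff_monomial, if_neg hpe, sub_zero]
    exact hgS _

variable {r : ℕ} {e : Fin r → (Fin n →₀ ℕ)}

theorem notMem_Delta_of_mem_Delta {i j : Fin r} (hij : i ≠ j) {α : Fin n →₀ ℕ}
    (hi : α ∈ Delta e i) : α ∉ Delta e j := by
  intro hj
  rcases hij.lt_or_gt with h | h
  · exact hj.2 (Set.mem_biUnion h hi.1)
  · exact hi.2 (Set.mem_biUnion h hj.1)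

theorem QuotCond.add_mem_Delta {q : Fin r → MvPowerSeries (Fin n) A} (hq : QuotCond e q)
    {j : Fin r} {β : Fin n →₀ ℕ} (h : coeff β (q j) ≠ 0) : β + e j ∈ Delta e j :=
  (hq j).elim (fun h0 => absurd (by simp [h0]) h) fun hND => hND β h

theorem RemCond.mem_DeltaBar {R : MvPowerSeries (Fin n) A} (hR : RemCond e R)
    {α : Fin n →₀ ℕ} (h : coeff α R ≠ 0) : α ∈ DeltaBar e :=
  hR.elim (fun h0 => absurd (by simp [h0]) h) fun hND => hND h

theorem coeff_mul_monomial_eq_zero_of_notMem_Delta {q : Fin r → MvPowerSeries (Fin n) A}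
    (hq : QuotCond e q) {j : Fin r} {α : Fin n →₀ ℕ} (hα : α ∉ Delta e j) (c : A) :
    coeff α (q j * monomial (e j) c) = 0 := by
  rw [coeff_mul_monomial]
  split_ifs with hle
  · by_contra h
    apply hα
    simpa [tsub_add_cancel_of_le hle] using hq.add_mem_Delta (left_ne_zero_of_mul h)
  · rfl

theorem coeff_sum_mul_monomial_add_of_coeff_remainder_ne_zero
    {q : Fin r → MvPowerSeries (Fin n) A} {R : MvPowerSeries (Fin n) A} (hq : QuotCond e q)
    (hR : RemCond e R) (c : Fin r → A) {α : Fin n →₀ ℕ} (h : coeff α R ≠ 0) :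
    coeff α (∑ j, q j * monomial (e j) (c j) + R) = coeff α R := by
  have hα := hR.mem_DeltaBar h
  rw [map_add, map_sum, Finset.sum_eq_zero, zero_add]
  exact fun j _ => coeff_mul_monomial_eq_zero_of_notMem_Delta hq
    (fun hj => hα (Set.mem_iUnion_of_mem j hj.1)) _

theorem coeff_sum_mul_monomial_add_of_coeff_quotient_ne_zero
    {q : Fin r → MvPowerSeries (Fin n) A} {R : MvPowerSeries (Fin n) A} (hq : QuotCond e q)
    (hR : RemCond e R) (c : Fin r → A) {i : Fin r} {β : Fin n →₀ ℕ} (h : coeff β (q i) ≠ 0) :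
    coeff (β + e i) (∑ j, q j * monomial (e j) (c j) + R) = coeff β (q i) * c i := by
  have hβ := hq.add_mem_Delta h
  have hR0 : coeff (β + e i) R = 0 := by
    by_contra hR0
    exact hR.mem_DeltaBar hR0 (Set.mem_iUnion_of_mem i hβ.1)
  rw [map_add, map_sum, hR0, add_zero, Finset.sum_eq_single i, coeff_mul_monomial,
    if_pos le_add_self, add_tsub_cancel_right]
  · exact fun j _ hji => coeff_mul_monomial_eq_zero_of_notMem_Delta hq
      (notMem_Delta_of_mem_Delta hji.symm hβ) _
  · simp

theorem IsLocalMonomialOrder.coeff_division_mem (hlt : IsLocalMonomialOrder lt)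
    {g : Fin r → MvPowerSeries (Fin n) A} (he : ∀ j, IsExp lt (g j) (e j)) {S : Subring A}
    (hgS : ∀ j γ, coeff γ (g j) ∈ S) (hS : ∀ j x, x * coeff (e j) (g j) ∈ S → x ∈ S)
    {f : MvPowerSeries (Fin n) A} (hfS : ∀ α, coeff α f ∈ S)
    {q : Fin r → MvPowerSeries (Fin n) A} {R : MvPowerSeries (Fin n) A}
    (hdiv : f = ∑ j, q j * g j + R) (hq : QuotCond e q) (hR : RemCond e R) (α : Fin n →₀ ℕ) :
    coeff α R ∈ S ∧ ∀ i, coeff α (q i) ∈ S := by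
  set lead := ∑ j, q j * monomial (e j) (coeff (e j) (g j)) + R
  have hlead : lead = f - ∑ j, q j * (g j - monomial (e j) (coeff (e j) (g j))) := by
    simp only [lead, hdiv, mul_sub, Finset.sum_sub_distrib]
    ring
  suffices key : ∀ α, coeff α R ∈ S ∧ ∀ i β, β + e i = α → coeff β (q i) ∈ S from
    ⟨(key α).1, fun i => (key (α + e i)).2 i α rfl⟩
  intro α
  induction α using hlt.wellFounded_flip.induction with
  | _ α ih =>
  have hleadS : coeff α lead ∈ S := by
    rw [hlead, map_sub, map_sum]
    exact S.sub_mem (hfS α) <| S.sum_mem fun j _ =>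
      hlt.coeff_mul_sub_monomial_mem (he j) (hgS j) fun β hβ => (ih _ hβ).2 j β rfl
  refine ⟨?_, fun i β hβ => ?_⟩
  · by_cases h : coeff α R = 0
    · exact h ▸ S.zero_mem
    · rwa [← coeff_sum_mul_monomial_add_of_coeff_remainder_ne_zero hq hR _ h]
  · by_cases h : coeff β (q i) = 0
    · exact h ▸ S.zero_mem
    · subst hβ
      exact hS i _ (by rwa [← coeff_sum_mul_monomial_add_of_coeff_quotient_ne_zero hq hR
        (fun j => coeff (e j) (g j)) h])

end Division

theorem coeff_denominators_of_division_general {n : ℕ} (F : Type) [Field F]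
    (C : Subring F)
    (lt : (Fin n →₀ ℕ) → (Fin n →₀ ℕ) → Prop) (hlt : IsLocalMonomialOrder lt)
    {r : ℕ} (g : Fin r → MvPowerSeries (Fin n) F)
    (hgC : ∀ j α, MvPowerSeries.coeff α (g j) ∈ C)
    (f : MvPowerSeries (Fin n) F) (hfC : ∀ α, MvPowerSeries.coeff α f ∈ C)
    (e : Fin r → (Fin n →₀ ℕ)) (he : ∀ j, IsExp lt (g j) (e j))
    (q : Fin r → MvPowerSeries (Fin n) F) (R : MvPowerSeries (Fin n) F)
    (hdiv : f = (∑ j, q j * g j) + R) (hq : QuotCond e q) (hR : RemCond e R) :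
    ∀ α : Fin n →₀ ℕ,
      (∃ d : Fin r → ℕ,
        MvPowerSeries.coeff α R * ∏ j, (MvPowerSeries.coeff (e j) (g j)) ^ (d j) ∈ C) ∧
      (∀ i, ∃ d : Fin r → ℕ,
        MvPowerSeries.coeff α (q i) * ∏ j, (MvPowerSeries.coeff (e j) (g j)) ^ (d j) ∈ C) := by
  have hM : Submonoid.closure (Set.range fun j => coeff (e j) (g j)) ≤ C.toSubmonoid :=
    Submonoid.closure_le.mpr (Set.range_subset_iff.mpr fun j => hgC j (e j))
  intro α
  obtain ⟨hRα, hqα⟩ := hlt.coeff_division_mem he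
    (fun j γ => Subring.le_withDenominators (hM := hM) (hgC j γ))
    (fun j _ hx => Subring.mem_withDenominators_of_mul_mem
      (Submonoid.subset_closure (Set.mem_range_self j)) hx)
    (fun α => Subring.le_withDenominators (hM := hM) (hfC α)) hdiv hq hR α
  exact ⟨(Subring.mem_withDenominators_closure_range_iff hM).mp hRα,
    fun i => (Subring.mem_withDenominators_closure_range_iff hM).mp (hqα i)⟩

/-- if `f, g_1, …, g_r` have all their coefficients in a subring `C` of the
field `F`, then every coefficient of the remainder and of the quotients of the division of
`f` by the `g_j` in `F[[x]]` has the form `c / ∏_j lc(g_j)^{d_j}` with `c ∈ C`,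
`d_j ∈ ℕ`. -/
theorem coeff_denominators_of_division {n : ℕ} (hn : 1 ≤ n) (F : Type) [Field F]
    (C : Subring F)
    (lt : (Fin n →₀ ℕ) → (Fin n →₀ ℕ) → Prop) (hlt : IsLocalMonomialOrder lt)
    {r : ℕ} (g : Fin r → MvPowerSeries (Fin n) F) (hg : ∀ j, g j ≠ 0)
    (hgC : ∀ j α, MvPowerSeries.coeff α (g j) ∈ C)
    (f : MvPowerSeries (Fin n) F) (hfC : ∀ α, MvPowerSeries.coeff α f ∈ C)
    (e : Fin r → (Fin n →₀ ℕ)) (he : ∀ j, IsExp lt (g j) (e j))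
    (q : Fin r → MvPowerSeries (Fin n) F) (R : MvPowerSeries (Fin n) F)
    (hdiv : f = (∑ j, q j * g j) + R) (hq : QuotCond e q) (hR : RemCond e R) :
    ∀ α : Fin n →₀ ℕ,
      (∃ d : Fin r → ℕ,
        MvPowerSeries.coeff α R * ∏ j, (MvPowerSeries.coeff (e j) (g j)) ^ (d j) ∈ C) ∧
      (∀ i, ∃ d : Fin r → ℕ,
        MvPowerSeries.coeff α (q i) * ∏ j, (MvPowerSeries.coeff (e j) (g j)) ^ (d j) ∈ C) :=
  coeff_denominators_of_division_general F C lt hlt g hgC f hfC e he q R hdiv hq hR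
end
end

section
/- Let k be a field, ≺ a local monomial order on ℕ^n, J an ideal of k[[x]], and g_1,…,g_r nonzero elements of J. Let Δ_1,…,Δ_r, Δ̄ be the partition of ℕ^n associated to the exp(g_j). Then the following are equivalent: (a) every f ∈ J can be written f = ∑_{j=1}^r q_j g_j with q_j ∈ k[[x]] and, for each j, q_j = 0 or ND(q_j) + exp(g_j) ⊆ Δ_j (i.e. the remainder of the division of f by g_1,…,g_r is zero); (b) {g_1,…,g_r} is a standard basis of J, i.e. Exp(J) = ⋃_{j=1}^r (exp(g_j)+ℕ^n). -/
open MvPowerSeries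

noncomputable section

/-!
(b) ⇒ (a): divide `f ∈ J` by the `g_j` to get `f = ∑ q_j g_j + R` with `ND(R) ⊆ Δ̄`. Then
`R ∈ J`, so if `R ≠ 0` its leading exponent lies in `Exp(J) = ⋃ (e_j + ℕ^n)`, which misses `Δ̄`.
The division is built coefficient by coefficient by descending recursion along `≺`; this is
well founded because a local order has no infinite ascending chains (Dickson's lemma).

(a) ⇒ (b): in `f = ∑ q_j g_j` the leading exponents of the nonzero `q_j g_j` lie in the disjoint
`Δ_j`, so the largest one is `exp f`, and it lies in some `e_j + ℕ^n`. Conversely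
`exp (x^γ g_j) = γ + e_j`.
-/

open Finset.HasAntidiagonal

namespace IsMonomialOrder

variable {M : Type*} [AddCommMonoid M] {lt : M → M → Prop}

theorem lt_asymm (h : IsMonomialOrder lt) {a b : M} (hab : lt a b) : ¬ lt b a :=
  fun hba => h.irrefl a (h.trans _ _ _ hab hba)

theorem add_left (h : IsMonomialOrder lt) {a b : M} (c : M) (hab : lt a b) :
    lt (c + a) (c + b) := by
  simpa only [add_comm c] using h.add_right a b c hab

theorem add_lt_add_of_le (h : IsMonomialOrder lt) {a a' b b' : M} (ha : a' = a ∨ lt a' a)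
    (hb : b' = b ∨ lt b' b) (hne : (a', b') ≠ (a, b)) : lt (a' + b') (a + b) := by
  rcases ha with rfl | ha <;> rcases hb with rfl | hb
  · exact absurd rfl hne
  · exact h.add_left a' hb
  · exact h.add_right a' a b' ha
  · exact h.trans _ _ _ (h.add_right a' a b' ha) (h.add_left a hb)

end IsMonomialOrder

namespace IsLocalMonomialOrder

variable {M : Type*} [AddCommMonoid M] {lt : M → M → Prop}

theorem not_lt_of_le_s3 [LE M] [ExistsAddOfLE M] (h : IsLocalMonomialOrder lt) {a b : M}
    (hab : a ≤ b) : ¬ lt a b := by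
  obtain ⟨c, rfl⟩ := exists_add_of_le hab
  rcases h.le_zero c with rfl | hc
  · simpa using h.irrefl a
  · exact h.lt_asymm (by simpa using h.add_left a hc)

/-- By Dickson's lemma, since `a ≤ b` componentwise forces `b ≼ a`. -/
theorem wellFounded_flip_s3 [Preorder M] [ExistsAddOfLE M] [WellQuasiOrderedLE M]
    (h : IsLocalMonomialOrder lt) : WellFounded (flip lt) := by
  have : IsPreorder M (fun a b => ¬ lt a b) :=
    { refl := h.irrefl
      trans := fun a b c hab hbc hac => by
        rcases h.total a b with h' | rfl | h'
        exacts [hab h', hbc hac, hbc (h.trans _ _ _ h' hac)] }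
  have hwqo : WellQuasiOrdered (fun a b : M => ¬ lt a b) := fun f => by
    obtain ⟨i, j, hij, hle⟩ := wellQuasiOrdered_le f
    exact ⟨i, j, hij, h.not_lt_of_le_s3 hle⟩
  exact hwqo.wellFounded.mono fun a b hab => ⟨h.lt_asymm hab, not_not_intro hab⟩

theorem exists_max [Preorder M] [ExistsAddOfLE M] [WellQuasiOrderedLE M]
    (h : IsLocalMonomialOrder lt) {S : Set M} (hS : S.Nonempty) :
    ∃ m ∈ S, ∀ a ∈ S, a ≠ m → lt a m := by
  obtain ⟨m, hm, hmax⟩ := h.wellFounded_flip_s3.has_min S hS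
  refine ⟨m, hm, fun a ha hne => ?_⟩
  rcases h.total a m with h' | rfl | h'
  exacts [h', absurd rfl hne, absurd h' (hmax a ha)]

end IsLocalMonomialOrder

theorem WellFounded.exists_fixedPoint {α β : Type*} [Nonempty β] {r : α → α → Prop}
    (hr : WellFounded r) (Φ : (α → β) → α → β)
    (hΦ : ∀ c c' a, (∀ b, r b a → c b = c' b) → Φ c a = Φ c' a) :
    ∃ c : α → β, ∀ a, c a = Φ c a := by
  classical
  let c := hr.fix fun a rec => Φ (fun b => if h : r b a then rec b h else Classical.arbitrary β) a
  refine ⟨c, fun a => ?_⟩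
  rw [show c a = _ from hr.fix_eq _ a]
  exact hΦ _ _ a fun b hb => dif_pos hb

section Exponent

variable {n : ℕ} {k : Type*} [Semiring k] {lt : (Fin n →₀ ℕ) → (Fin n →₀ ℕ) → Prop}
  {f g : MvPowerSeries (Fin n) k} {a b β : Fin n →₀ ℕ}

theorem mem_ND : β ∈ ND f ↔ coeff β f ≠ 0 := Iff.rfl

theorem IsExp.eq_or_lt (hf : IsExp lt f a) (hβ : β ∈ ND f) : β = a ∨ lt β a :=
  (eq_or_ne β a).imp_right (hf.2 β hβ)

theorem IsExp.unique (hlt : IsMonomialOrder lt) (ha : IsExp lt f a) (hb : IsExp lt f b) :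
    a = b := by
  by_contra hne
  exact hlt.lt_asymm (hb.2 a ha.1 hne) (ha.2 b hb.1 (Ne.symm hne))

theorem exists_isExp (hlt : IsLocalMonomialOrder lt) (hf : f ≠ 0) : ∃ e, IsExp lt f e :=
  hlt.exists_max ((ne_zero_iff_exists_coeff_ne_zero f).mp hf)

theorem exists_add_eq_of_mem_ND_mul (h : β ∈ ND (f * g)) :
    ∃ a b, a + b = β ∧ a ∈ ND f ∧ b ∈ ND g := by
  classical
  obtain ⟨p, hp, hne⟩ := Finset.exists_ne_zero_of_sum_ne_zero ((coeff_mul β f g).symm.trans_ne h)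
  exact ⟨p.1, p.2, mem_antidiagonal.mp hp, left_ne_zero_of_mul hne,
    right_ne_zero_of_mul hne⟩

theorem coeff_add_mul_of_isExp (hlt : IsMonomialOrder lt) (hf : IsExp lt f a)
    (hg : IsExp lt g b) : coeff (a + b) (f * g) = coeff a f * coeff b g := by
  classical
  rw [coeff_mul]
  refine Finset.sum_eq_single_of_mem (a, b) (mem_antidiagonal.mpr rfl) fun p hp hne => ?_
  by_contra h
  have hp_lt := hlt.add_lt_add_of_le (hf.eq_or_lt (left_ne_zero_of_mul h))
    (hg.eq_or_lt (right_ne_zero_of_mul h)) hne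
  rw [mem_antidiagonal.mp hp] at hp_lt
  exact hlt.irrefl _ hp_lt

theorem IsExp.mul [NoZeroDivisors k] (hlt : IsMonomialOrder lt) (hf : IsExp lt f a)
    (hg : IsExp lt g b) : IsExp lt (f * g) (a + b) := by
  refine ⟨?_, fun β hβ hne => ?_⟩
  · simpa only [mem_ND, coeff_add_mul_of_isExp hlt hf hg] using
      mul_ne_zero hf.1 hg.1
  · obtain ⟨a', b', rfl, ha', hb'⟩ := exists_add_eq_of_mem_ND_mul hβ
    exact hlt.add_lt_add_of_le (hf.eq_or_lt ha') (hg.eq_or_lt hb') (by rintro ⟨⟩; exact hne rfl)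

theorem isExp_monomial {c : k} (hc : c ≠ 0) : IsExp lt (monomial a c) a := by
  classical
  refine ⟨by simpa [ND, coeff_monomial] using hc, fun β hβ hne => absurd ?_ hβ⟩
  simp [coeff_monomial, hne]

theorem isExp_sum {ι : Type*} (hlt : IsMonomialOrder lt) {s : Finset ι}
    {h : ι → MvPowerSeries (Fin n) k} {i : ι} (hi : i ∈ s) {m : Fin n →₀ ℕ}
    (hm : IsExp lt (h i) m) (hlt_m : ∀ j ∈ s, j ≠ i → ∀ β ∈ ND (h j), lt β m) :
    IsExp lt (∑ j ∈ s, h j) m := by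
  refine ⟨?_, fun β hβ hne => ?_⟩
  · rw [mem_ND, map_sum, Finset.sum_eq_single_of_mem i hi fun j hj hji => ?_]
    · exact hm.1
    · by_contra hm'
      exact hlt.irrefl m (hlt_m j hj hji m hm')
  · rw [mem_ND, map_sum] at hβ
    obtain ⟨j, hj, hβj⟩ := Finset.exists_ne_zero_of_sum_ne_zero hβ
    obtain rfl | hji := eq_or_ne j i
    · exact hm.2 β hβj hne
    · exact hlt_m j hj hji β hβj

end Exponent

section Partition

variable {n r : ℕ} {e : Fin r → (Fin n →₀ ℕ)} {α : Fin n →₀ ℕ}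

theorem mem_upSet_iff {d : Fin n →₀ ℕ} : α ∈ upSet d ↔ d ≤ α :=
  ⟨fun ⟨_, hγ⟩ => hγ ▸ le_self_add, fun h => exists_add_of_le h⟩

theorem eq_of_mem_Delta {i j : Fin r} (hi : α ∈ Delta e i) (hj : α ∈ Delta e j) : i = j := by
  by_contra hne
  rcases lt_or_gt_of_ne hne with h | h
  · exact hj.2 (Set.mem_iUnion₂.mpr ⟨i, h, hi.1⟩)
  · exact hi.2 (Set.mem_iUnion₂.mpr ⟨j, h, hj.1⟩)

theorem exists_mem_Delta (h : α ∈ ⋃ j, upSet (e j)) : ∃ j, α ∈ Delta e j := by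
  obtain ⟨j, hj, hmin⟩ := wellFounded_lt.has_min {i | α ∈ upSet (e i)} (Set.mem_iUnion.mp h)
  exact ⟨j, hj, fun hi => by
    obtain ⟨i, hij, hi⟩ := Set.mem_iUnion₂.mp hi
    exact hmin i hi hij⟩

open Classical in
theorem sum_ite_mem_Delta_add_ite_mem_DeltaBar {M : Type*} [AddCommMonoid M] (x : M) :
    (∑ j, if α ∈ Delta e j then x else 0) + (if α ∈ DeltaBar e then x else 0) = x := by
  by_cases hbar : α ∈ DeltaBar e
  · rw [if_pos hbar, Finset.sum_eq_zero fun j _ => if_neg fun hj => hbar ?_, zero_add]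
    exact Set.mem_iUnion.mpr ⟨j, hj.1⟩
  · obtain ⟨j, hj⟩ := exists_mem_Delta (not_not.mp hbar)
    rw [if_neg hbar, add_zero, Fintype.sum_eq_single j fun i hi => if_neg fun h' => hi ?_,
      if_pos hj]
    exact eq_of_mem_Delta h' hj

end Partition

section Division

variable {n : ℕ} {k : Type*} {lt : (Fin n →₀ ℕ) → (Fin n →₀ ℕ) → Prop}

open Classical in
/-- The terms of `coeff α (q * g)` involving coefficients of `q` that the descending recursion of
`exists_division` has already fixed when it reaches `α`. -/
def mulCoeffAbove [Semiring k] (lt : (Fin n →₀ ℕ) → (Fin n →₀ ℕ) → Prop) (e : Fin n →₀ ℕ)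
    (q g : MvPowerSeries (Fin n) k) (α : Fin n →₀ ℕ) : k :=
  ∑ p ∈ (antidiagonal α).filter (fun p => lt α (p.1 + e)), coeff p.1 q * coeff p.2 g

theorem mulCoeffAbove_congr [Semiring k] {e α : Fin n →₀ ℕ} {q q' g : MvPowerSeries (Fin n) k}
    (h : ∀ δ, lt α (δ + e) → coeff δ q = coeff δ q') :
    mulCoeffAbove lt e q g α = mulCoeffAbove lt e q' g α := by
  classical
  exact Finset.sum_congr rfl fun p hp => by rw [h p.1 (Finset.mem_filter.mp hp).2]

/-- As `exp g = e`, a term `x^δ · x^β` of `q * g` at `α` has `α ≼ δ + e`, with equality only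
for `β = e`. -/
theorem coeff_mul_eq_mulCoeffAbove_add [Semiring k] (hlt : IsMonomialOrder lt)
    {q g : MvPowerSeries (Fin n) k} {e : Fin n →₀ ℕ} (he : IsExp lt g e) (α : Fin n →₀ ℕ) :
    coeff α (q * g) =
      mulCoeffAbove lt e q g α + if e ≤ α then coeff (α - e) q * coeff e g else 0 := by
  classical
  rw [coeff_mul, mulCoeffAbove,
    ← Finset.sum_filter_add_sum_filter_not _ (fun p => lt α (p.1 + e))]
  congr 1
  have hsnd : ∀ p ∈ (antidiagonal α).filter (fun p => ¬ lt α (p.1 + e)),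
      coeff p.2 g ≠ 0 → p = (α - e, e) := by
    intro p hp hne
    obtain ⟨hp, hnot⟩ := Finset.mem_filter.mp hp
    have hsum := mem_antidiagonal.mp hp
    obtain h2 | h2 := he.eq_or_lt hne
    · exact Prod.ext (by rw [← hsum, h2, add_tsub_cancel_right]) h2
    · have := hlt.add_left p.1 h2
      rw [hsum] at this
      exact absurd this hnot
  split_ifs with hle
  · refine Finset.sum_eq_single_of_mem (α - e, e) ?_ fun p hp hne => ?_
    · simp [tsub_add_cancel_of_le hle, hlt.irrefl]
    · by_contra h
      exact hne (hsnd p hp (right_ne_zero_of_mul h))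
  · refine Finset.sum_eq_zero fun p hp => ?_
    by_contra h
    have hsum := mem_antidiagonal.mp (Finset.mem_filter.mp hp).1
    rw [hsnd p hp (right_ne_zero_of_mul h)] at hsum
    exact hle (hsum ▸ le_add_self)

open Classical in
def divRemainder [Zero k] {r : ℕ} (e : Fin r → (Fin n →₀ ℕ)) (c : (Fin n →₀ ℕ) → k) :
    MvPowerSeries (Fin n) k :=
  fun α => if α ∈ DeltaBar e then c α else 0

open Classical in
theorem coeff_divRemainder [Semiring k] {r : ℕ} (e : Fin r → (Fin n →₀ ℕ)) (c : (Fin n →₀ ℕ) → k)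
    (α : Fin n →₀ ℕ) : coeff α (divRemainder e c) = if α ∈ DeltaBar e then c α else 0 :=
  rfl

variable [Field k] {r : ℕ} (g : Fin r → MvPowerSeries (Fin n) k) (e : Fin r → (Fin n →₀ ℕ))

open Classical in
/-- `c α` stands for the coefficient at `α` of `f` minus the terms of `∑ q_j g_j` fixed before
`α`; it becomes a coefficient of `q_j` when `α ∈ Δ_j` and of the remainder when `α ∈ Δ̄`. -/
def divQuotient (c : (Fin n →₀ ℕ) → k) (j : Fin r) : MvPowerSeries (Fin n) k :=
  fun δ => if δ + e j ∈ Delta e j then c (δ + e j) / coeff (e j) (g j) else 0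

open Classical in
theorem coeff_divQuotient (c : (Fin n →₀ ℕ) → k) (j : Fin r) (δ : Fin n →₀ ℕ) :
    coeff δ (divQuotient g e c j) =
      if δ + e j ∈ Delta e j then c (δ + e j) / coeff (e j) (g j) else 0 :=
  rfl

open Classical in
theorem coeff_divQuotient_mul (hlt : IsMonomialOrder lt) (he : ∀ j, IsExp lt (g j) (e j))
    (c : (Fin n →₀ ℕ) → k) (j : Fin r) (α : Fin n →₀ ℕ) :
    coeff α (divQuotient g e c j * g j) =
      mulCoeffAbove lt (e j) (divQuotient g e c j) (g j) α +
        if α ∈ Delta e j then c α else 0 := by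
  rw [coeff_mul_eq_mulCoeffAbove_add hlt (he j)]
  congr 1
  split_ifs with hle hΔ hΔ
  · rw [coeff_divQuotient, tsub_add_cancel_of_le hle, if_pos hΔ, div_mul_cancel₀ _ (he j).1]
  · rw [coeff_divQuotient, tsub_add_cancel_of_le hle, if_neg hΔ, zero_mul]
  · exact absurd (mem_upSet_iff.mp hΔ.1) hle
  · rfl

theorem exists_division (hlt : IsLocalMonomialOrder lt) (he : ∀ j, IsExp lt (g j) (e j))
    (f : MvPowerSeries (Fin n) k) :
    ∃ q R, f = ∑ j, q j * g j + R ∧ QuotCond e q ∧ RemCond e R := by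
  classical
  obtain ⟨c, hc⟩ := hlt.wellFounded_flip_s3.exists_fixedPoint
    (fun c α => coeff α f - ∑ j, mulCoeffAbove lt (e j) (divQuotient g e c j) (g j) α)
    fun c c' α h => by
      congr 1
      refine Finset.sum_congr rfl fun j _ => mulCoeffAbove_congr fun δ hδ => ?_
      rw [coeff_divQuotient, coeff_divQuotient, h _ hδ]
  refine ⟨divQuotient g e c, divRemainder e c, ?_, fun j => Or.inr fun δ hδ => ?_,
    Or.inr fun α hα => ?_⟩
  · ext α
    simp only [map_add, map_sum, coeff_divQuotient_mul g e hlt.toIsMonomialOrder he,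
      Finset.sum_add_distrib, add_assoc]
    rw [coeff_divRemainder, sum_ite_mem_Delta_add_ite_mem_DeltaBar]
    linear_combination -hc α
  · by_contra h
    exact hδ ((coeff_divQuotient g e c j δ).trans (if_neg h))
  · by_contra h
    exact hα ((coeff_divRemainder e c α).trans (if_neg h))

end Division

section StandardBasis

variable {n : ℕ} {k : Type*} {lt : (Fin n →₀ ℕ) → (Fin n →₀ ℕ) → Prop} {r : ℕ}
  {g : Fin r → MvPowerSeries (Fin n) k} {e : Fin r → (Fin n →₀ ℕ)}

theorem iUnion_upSet_subset_expSet [Semiring k] [NoZeroDivisors k] [Nontrivial k]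
    (hlt : IsMonomialOrder lt) {J : Ideal (MvPowerSeries (Fin n) k)} (hgJ : ∀ j, g j ∈ J)
    (he : ∀ j, IsExp lt (g j) (e j)) : ⋃ j, upSet (e j) ⊆ ExpSet lt J := by
  rintro _ ⟨_, ⟨j, rfl⟩, γ, rfl⟩
  refine ⟨monomial γ 1 * g j, J.mul_mem_left _ (hgJ j), ?_⟩
  rw [add_comm]
  exact (isExp_monomial one_ne_zero).mul hlt (he j)

theorem exists_isExp_mul_mem_Delta [Semiring k] [NoZeroDivisors k]
    (hlt : IsLocalMonomialOrder lt) (he : ∀ j, IsExp lt (g j) (e j))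
    {q : Fin r → MvPowerSeries (Fin n) k} (hq : QuotCond e q) {j : Fin r} (hqj : q j ≠ 0) :
    ∃ m, IsExp lt (q j * g j) m ∧ m ∈ Delta e j := by
  obtain ⟨d, hd⟩ := exists_isExp hlt hqj
  exact ⟨d + e j, hd.mul hlt.toIsMonomialOrder (he j), (hq j).resolve_left hqj d hd.1⟩

/-- The leading exponents of the nonzero `q_j g_j` lie in the pairwise disjoint `Δ_j`, so they
are distinct and the largest of them cannot cancel in the sum. -/
theorem mem_iUnion_upSet_of_isExp_sum [Semiring k] [NoZeroDivisors k]
    (hlt : IsLocalMonomialOrder lt) (he : ∀ j, IsExp lt (g j) (e j))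
    {q : Fin r → MvPowerSeries (Fin n) k} (hq : QuotCond e q) {α : Fin n →₀ ℕ}
    (hα : IsExp lt (∑ j, q j * g j) α) : α ∈ ⋃ j, upSet (e j) := by
  have hq_ne : ∃ j, q j ≠ 0 := by
    by_contra! h
    exact hα.1 (by simp [h])
  obtain ⟨j, hj⟩ := hq_ne
  obtain ⟨m₀, hm₀, hm₀Δ⟩ := exists_isExp_mul_mem_Delta hlt he hq hj
  obtain ⟨m, ⟨j₀, hm, hmΔ⟩, hmax⟩ :=
    hlt.exists_max (S := {m | ∃ j, IsExp lt (q j * g j) m ∧ m ∈ Delta e j}) ⟨m₀, j, hm₀, hm₀Δ⟩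
  have hsum : IsExp lt (∑ j, q j * g j) m := by
    refine isExp_sum hlt.toIsMonomialOrder (Finset.mem_univ j₀) hm fun i _ hi β hβ => ?_
    have hqi : q i ≠ 0 := by
      rintro hqi
      simp [hqi, mem_ND] at hβ
    obtain ⟨m', hm', hm'Δ⟩ := exists_isExp_mul_mem_Delta hlt he hq hqi
    have hlt' : lt m' m := hmax m' ⟨i, hm', hm'Δ⟩ fun h => hi (eq_of_mem_Delta hm'Δ (h ▸ hmΔ))
    rcases hm'.eq_or_lt hβ with rfl | hβ
    exacts [hlt', hlt.trans _ _ _ hβ hlt']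
  rw [hα.unique hlt.toIsMonomialOrder hsum]
  exact Set.mem_iUnion.mpr ⟨j₀, hmΔ.1⟩

theorem eq_zero_of_remCond [Semiring k] (hlt : IsLocalMonomialOrder lt)
    {J : Ideal (MvPowerSeries (Fin n) k)} (hJ : ExpSet lt J ⊆ ⋃ j, upSet (e j))
    {R : MvPowerSeries (Fin n) k} (hRJ : R ∈ J) (hR : RemCond e R) : R = 0 := by
  by_contra hR0
  obtain ⟨m, hm⟩ := exists_isExp hlt hR0
  exact hR.resolve_left hR0 hm.1 (hJ ⟨R, hRJ, hm⟩)

end StandardBasis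

theorem remainder_zero_iff_standardBasis_general {n : ℕ} (k : Type) [Field k]
    (lt : (Fin n →₀ ℕ) → (Fin n →₀ ℕ) → Prop) (hlt : IsLocalMonomialOrder lt)
    (J : Ideal (MvPowerSeries (Fin n) k))
    {r : ℕ} (g : Fin r → MvPowerSeries (Fin n) k)
    (hgJ : ∀ j, g j ∈ J)
    (e : Fin r → (Fin n →₀ ℕ)) (he : ∀ j, IsExp lt (g j) (e j)) :
    (∀ f ∈ J, ∃ q : Fin r → MvPowerSeries (Fin n) k,
        f = (∑ j, q j * g j) ∧ QuotCond e q) ↔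
      ExpSet lt J = ⋃ j, upSet (e j) := by
  constructor
  · intro hdiv
    refine subset_antisymm ?_ (iUnion_upSet_subset_expSet hlt.toIsMonomialOrder hgJ he)
    rintro α ⟨f, hfJ, hfα⟩
    obtain ⟨q, rfl, hq⟩ := hdiv f hfJ
    exact mem_iUnion_upSet_of_isExp_sum hlt he hq hfα
  · intro hJ f hfJ
    obtain ⟨q, R, rfl, hq, hR⟩ := exists_division g e hlt he f
    have hRJ : R ∈ J := by
      simpa using J.sub_mem hfJ
        (J.sum_mem (t := Finset.univ) fun j _ => J.mul_mem_left (q j) (hgJ j))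
    exact ⟨q, by rw [eq_zero_of_remCond hlt hJ.subset hRJ hR, add_zero], hq⟩

/-- for nonzero `g_1, …, g_r` in an ideal `J ⊆ k[[x]]`, the following are
equivalent: (a) every `f ∈ J` has a standard writing `f = ∑ q_j g_j` with each `q_j = 0`
or `ND(q_j) + exp(g_j) ⊆ Δ_j` (i.e. the remainder of the division of `f` by the `g_j` is
zero); (b) `{g_1, …, g_r}` is a standard basis of `J`, i.e.
`Exp(J) = ⋃_j (exp(g_j) + ℕ^n)`. -/
theorem remainder_zero_iff_standardBasis {n : ℕ} (hn : 1 ≤ n) (k : Type) [Field k]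
    (lt : (Fin n →₀ ℕ) → (Fin n →₀ ℕ) → Prop) (hlt : IsLocalMonomialOrder lt)
    (J : Ideal (MvPowerSeries (Fin n) k))
    {r : ℕ} (g : Fin r → MvPowerSeries (Fin n) k)
    (hgJ : ∀ j, g j ∈ J) (hg : ∀ j, g j ≠ 0)
    (e : Fin r → (Fin n →₀ ℕ)) (he : ∀ j, IsExp lt (g j) (e j)) :
    (∀ f ∈ J, ∃ q : Fin r → MvPowerSeries (Fin n) k,
        f = (∑ j, q j * g j) ∧ QuotCond e q) ↔
      ExpSet lt J = ⋃ j, upSet (e j) :=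
  remainder_zero_iff_standardBasis_general k lt hlt J g hgJ e he
end
end
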